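/- arXiv:2004.07718 — 6 statements merged into one kernel-verified Lean document; each statement's English description precedes it below -/
import Mathlib

section
/- Let (V,d) be a metric space, k ≥ 1 an integer, z ≥ 1 a real, and let ρ ≥ 1 and s ≥ 2 be reals. Suppose that for every weighted set X in V and every ε ∈ (0,1/4) there exists an ε-coreset for (k,z)-clustering on X having at most s·ε^{−ρ}·log₂(2+‖X‖₀) distinct points. Then there exists a constant C depending only on ρ such that for every weighted set X in V and every ε ∈ (0,1/4) there exists an ε-coreset for (k,z)-clustering on X having at most C·s·ε^{−ρ}·(1+log₂(s·ε^{−ρ}))^C distinct points. -/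
open Finset

/-- A weighted set in `V`: a finite set of points together with positive weights. -/
structure WSet (V : Type*) where
  pts : Finset V
  w : V → ℝ
  pos : ∀ x ∈ pts, 0 < w x

/-- `cost_z(X, C) = Σ_{x ∈ X} w_X(x) · d(x, C)^z`. -/
noncomputable def costz {V : Type*} [MetricSpace V] (z : ℝ) (X : WSet V) (C : Finset V) : ℝ :=
  ∑ x ∈ X.pts, X.w x * Metric.infDist x (C : Set V) ^ z

/-- `D` is an `ε`-coreset for `(k,z)`-clustering on `X`. -/
def IsCoreset {V : Type*} [MetricSpace V] (k : ℕ) (z ε : ℝ) (X D : WSet V) : Prop :=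
  D.pts ⊆ X.pts ∧ ∀ C : Finset V, C.Nonempty → C.card ≤ k →
    (1 - ε) * costz z X C ≤ costz z D C ∧ costz z D C ≤ (1 + ε) * costz z X C

/-!
Iterate the given construction, composing the errors (an `a`-coreset of a `b`-coreset is an
`(a + b + ab)`-coreset). On a set of size `m`, with `L = log (4 + m)`, refine with error
`ε / (2 L²)` as long as this lowers `L` by at least one: the potential `ε (1 - 1 / L)` then drops
by at least `ε / L²`, which pays for the step, so the total error stays below `ε`. When the
iteration stops, `L < log (4 + m') + 1` for the guaranteed size `m' ≤ B (2L)^(2ρ+1)` of the next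
refinement, `B = s ε^(-ρ)`. Hence `4 + m ≤ 8 B (2L)^(2ρ+1)`, i.e. `L ≤ log (8B) + p log (2L)`
with `p = 2ρ + 1`, which bounds `L` by `O_p(1 + log B)` and `m` by `O_p(B (1 + log₂ B)^p)`.
-/

lemma costz_nonneg {V : Type*} [MetricSpace V] (z : ℝ) (X : WSet V) (C : Finset V) :
    0 ≤ costz z X C :=
  Finset.sum_nonneg fun x hx =>
    mul_nonneg (X.pos x hx).le (Real.rpow_nonneg Metric.infDist_nonneg z)

namespace IsCoreset

variable {V : Type*} [MetricSpace V] {k : ℕ} {z a b : ℝ} {X D E : WSet V}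

theorem refl (ha : 0 ≤ a) (X : WSet V) : IsCoreset k z a X X := by
  refine ⟨subset_rfl, fun C _ _ => ?_⟩
  have := costz_nonneg z X C
  constructor <;> nlinarith

theorem mono (h : IsCoreset k z a X D) (hab : a ≤ b) : IsCoreset k z b X D := by
  refine ⟨h.1, fun C hC hCk => ?_⟩
  have := costz_nonneg z X C
  obtain ⟨hlo, hhi⟩ := h.2 C hC hCk
  constructor <;> nlinarith

theorem trans (hXD : IsCoreset k z a X D) (hDE : IsCoreset k z b D E) (ha : 0 ≤ a) (hb : 0 ≤ b)
    (hb1 : b ≤ 1) : IsCoreset k z (a + b + a * b) X E := by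
  refine ⟨hDE.1.trans hXD.1, fun C hC hCk => ?_⟩
  obtain ⟨hXD_lo, hXD_hi⟩ := hXD.2 C hC hCk
  obtain ⟨hDE_lo, hDE_hi⟩ := hDE.2 C hC hCk
  have hX := costz_nonneg z X C
  have hab : 0 ≤ a * b * costz z X C := by positivity
  constructor
  · nlinarith [mul_le_mul_of_nonneg_left hXD_lo (by linarith : (0 : ℝ) ≤ 1 - b)]
  · nlinarith [mul_le_mul_of_nonneg_left hXD_hi (by linarith : (0 : ℝ) ≤ 1 + b)]

end IsCoreset

lemma one_le_log_four_add {x : ℝ} (hx : 0 ≤ x) : 1 ≤ Real.log (4 + x) := by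
  rw [Real.le_log_iff_exp_le (by linarith)]
  linarith [Real.exp_one_lt_d9]

lemma inv_add_inv_sq_le_inv {L M : ℝ} (hM : 0 < M) (hML : M ≤ L - 1) :
    1 / L + 1 / L ^ 2 ≤ 1 / M := by
  have hL : 0 < L := by linarith
  rw [div_add_div _ _ hL.ne' (by positivity), div_le_div_iff₀ (by positivity) hM]
  nlinarith

theorem exists_isCoreset_log_lt_log_add_one {V : Type*} [MetricSpace V] {k : ℕ} {z ε : ℝ}
    (f : ℝ → ℝ) (hε : 0 < ε) (hε1 : ε ≤ 1)
    (hstep : ∀ Y : WSet V, ∃ D : WSet V,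
      IsCoreset k z (ε / (2 * Real.log (4 + Y.pts.card) ^ 2)) Y D ∧
        (D.pts.card : ℝ) ≤ f Y.pts.card)
    (Y : WSet V) (η : ℝ) (hη : ε * (1 - 1 / Real.log (4 + Y.pts.card)) ≤ η)
    (hηε : η ≤ ε) :
    ∃ D : WSet V, IsCoreset k z η Y D ∧
      Real.log (4 + D.pts.card) < Real.log (4 + f D.pts.card) + 1 := by
  induction hn : Y.pts.card using Nat.strong_induction_on generalizing Y η with
  | _ n ih =>
    have hpot : ∀ W : WSet V, 0 ≤ 1 - 1 / Real.log (4 + W.pts.card) := fun W => by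
      have := one_le_log_four_add (Nat.cast_nonneg (α := ℝ) W.pts.card)
      rw [sub_nonneg, div_le_one (by linarith)]
      exact this
    have hη0 : 0 ≤ η := le_trans (mul_nonneg hε.le (hpot Y)) hη
    set L := Real.log (4 + Y.pts.card)
    by_cases hstop : L < Real.log (4 + f Y.pts.card) + 1
    · exact ⟨Y, IsCoreset.refl hη0 Y, hstop⟩
    obtain ⟨D, hD, hDf⟩ := hstep Y
    set δ := ε / (2 * L ^ 2)
    have hL : 1 ≤ L := one_le_log_four_add (Nat.cast_nonneg _)
    have hδ : 0 ≤ δ := by positivity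
    have hDL : Real.log (4 + D.pts.card) ≤ L - 1 :=
      (Real.log_le_log (by positivity)
        (by linarith : 4 + (D.pts.card : ℝ) ≤ 4 + f Y.pts.card)).trans (by linarith)
    have hDY : D.pts.card < n := by
      have : 4 + (D.pts.card : ℝ) < 4 + Y.pts.card :=
        (Real.log_lt_log_iff (by positivity) (by positivity)).mp (by linarith)
      rw [← hn]
      exact_mod_cast (add_lt_add_iff_left 4).mp this
    have hηD : ε * (1 - 1 / Real.log (4 + D.pts.card)) ≤ η - 2 * δ := by
      have := inv_add_inv_sq_le_inv
        (zero_lt_one.trans_le (one_le_log_four_add (Nat.cast_nonneg _))) hDL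
      have h2δ : 2 * δ = ε * (1 / L ^ 2) := by
        simp only [δ]; field_simp
      nlinarith
    obtain ⟨E, hE, hEf⟩ := ih _ hDY D (η - 2 * δ) hηD (by linarith) rfl
    have hη' : 0 ≤ η - 2 * δ := le_trans (mul_nonneg hε.le (hpot D)) hηD
    refine ⟨E, (hD.trans hE hδ hη' (by linarith)).mono ?_, hEf⟩
    nlinarith [mul_le_mul_of_nonneg_left (by linarith : η - 2 * δ ≤ 1) hδ]

lemma Real.log_le_logb_two {x : ℝ} (hx : 1 ≤ x) : Real.log x ≤ Real.logb 2 x := by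
  have := Real.log_nonneg hx
  rw [Real.logb, le_div_iff₀ (Real.log_pos one_lt_two)]
  nlinarith [Real.log_two_lt_d9]

lemma Real.logb_two_le_two_mul_log {x : ℝ} (hx : 1 ≤ x) : Real.logb 2 x ≤ 2 * Real.log x := by
  have := Real.log_nonneg hx
  rw [Real.logb, div_le_iff₀ (Real.log_pos one_lt_two)]
  nlinarith [Real.log_two_gt_d9]

lemma rpow_neg_div_two_mul_sq_le {ε L ρ : ℝ} (hε : 0 < ε) (hL : 0 < L) (hρ : 0 ≤ ρ) :
    (ε / (2 * L ^ 2)) ^ (-ρ) ≤ ε ^ (-ρ) * (2 * L) ^ (2 * ρ) := by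
  rw [Real.div_rpow hε.le (by positivity), Real.rpow_neg (x := 2 * L ^ 2) (by positivity) ρ,
    div_inv_eq_mul,
    Real.rpow_mul (by positivity), Real.rpow_two]
  gcongr
  nlinarith

theorem four_add_le_of_log_lt_log_add_one {s ε ρ m : ℝ} (hε : 0 < ε) (hρ : 0 ≤ ρ)
    (hm : 0 ≤ m) (hB : 2 ≤ s * ε ^ (-ρ))
    (h : Real.log (4 + m) <
      Real.log (4 + s * (ε / (2 * Real.log (4 + m) ^ 2)) ^ (-ρ) * Real.logb 2 (2 + m)) + 1) :
    4 + m ≤ 8 * (s * ε ^ (-ρ)) * (2 * Real.log (4 + m)) ^ (2 * ρ + 1) := by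
  set L := Real.log (4 + m)
  set B := s * ε ^ (-ρ)
  have hL : 1 ≤ L := one_le_log_four_add hm
  have hs : 0 ≤ s := by
    by_contra hs
    nlinarith [Real.rpow_pos_of_pos hε (-ρ)]
  have hlogb0 : 0 ≤ Real.logb 2 (2 + m) := Real.logb_nonneg one_lt_two (by linarith)
  have hf0 : 0 ≤ s * (ε / (2 * L ^ 2)) ^ (-ρ) * Real.logb 2 (2 + m) := by positivity
  have hδ := rpow_neg_div_two_mul_sq_le hε (by linarith : 0 < L) hρ
  have hlogb : Real.logb 2 (2 + m) ≤ 2 * L :=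
    (Real.logb_two_le_two_mul_log (by linarith)).trans
      (by gcongr; exact Real.log_le_log (by linarith) (by linarith))
  have hf : s * (ε / (2 * L ^ 2)) ^ (-ρ) * Real.logb 2 (2 + m) ≤ B * (2 * L) ^ (2 * ρ + 1) :=
    calc s * (ε / (2 * L ^ 2)) ^ (-ρ) * Real.logb 2 (2 + m)
        ≤ s * (ε ^ (-ρ) * (2 * L) ^ (2 * ρ)) * (2 * L) := by gcongr
      _ = B * (2 * L) ^ (2 * ρ + 1) := by
          rw [Real.rpow_add_one (by positivity)]; ring
  have hLp : 2 ≤ (2 * L) ^ (2 * ρ + 1) :=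
    calc (2 : ℝ) ≤ (2 * L) ^ (1 : ℝ) := by rw [Real.rpow_one]; linarith
      _ ≤ (2 * L) ^ (2 * ρ + 1) := Real.rpow_le_rpow_of_exponent_le (by linarith) (by linarith)
  rw [Real.log_lt_iff_lt_exp (by positivity), Real.exp_add, Real.exp_log (by linarith)] at h
  nlinarith [Real.exp_one_lt_d9]

lemma le_two_mul_add_of_le_add_mul_log {y a p : ℝ} (hy : 0 < y) (hp : 0 < p)
    (h : y ≤ a + p * Real.log y) : y ≤ 2 * a + 2 * p * Real.log (2 * p) := by
  have hlog := Real.log_le_sub_one_of_pos (div_pos hy (mul_pos two_pos hp))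
  rw [Real.log_div hy.ne' (by positivity)] at hlog
  have := mul_le_mul_of_nonneg_left hlog hp.le
  have hy2 : p * (y / (2 * p) - 1) = y / 2 - p := by field_simp
  nlinarith

noncomputable def bootstrapConst (p : ℝ) : ℝ := 8 * (8 * p ^ 2 + 28) ^ p + p

theorem le_bootstrapConst_mul {x B p : ℝ} (hx : 0 ≤ x) (hB : 1 ≤ B) (hp : 1 ≤ p)
    (h : 4 + x ≤ 8 * B * (2 * Real.log (4 + x)) ^ p) :
    x ≤ bootstrapConst p * B * (1 + Real.logb 2 B) ^ bootstrapConst p := by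
  have hT := Real.log_le_logb_two hB
  set L := Real.log (4 + x)
  set T := Real.logb 2 B
  set C := bootstrapConst p
  have hL : 1 ≤ L := one_le_log_four_add hx
  have hT0 : 0 ≤ T := (Real.log_nonneg hB).trans hT
  have hLrec : L ≤ Real.log 8 + Real.log B + p * Real.log 2 + p * Real.log L := by
    have := Real.log_le_log (by positivity) h
    rwa [Real.log_mul (by positivity) (by positivity), Real.log_mul (by norm_num) (by positivity),
      Real.log_rpow (by positivity), Real.log_mul (by norm_num) (by positivity), mul_add,
      ← add_assoc] at this
  have hLc := le_two_mul_add_of_le_add_mul_log (by positivity) (by positivity) hLrec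
  have h8 := Real.log_le_sub_one_of_pos (show (0 : ℝ) < 8 by norm_num)
  have h2 := mul_le_mul_of_nonneg_left
    (Real.log_le_sub_one_of_pos (show (0 : ℝ) < 2 by norm_num)) (by positivity : 0 ≤ p)
  have h2p := mul_le_mul_of_nonneg_left
    (Real.log_le_sub_one_of_pos (show (0 : ℝ) < 2 * p by positivity)) (by positivity : 0 ≤ p)
  have hL2 : 2 * L ≤ (8 * p ^ 2 + 28) * (1 + T) := by nlinarith
  have hpC : p ≤ C := le_add_of_nonneg_left (by positivity)
  have hcoef : 8 * (8 * p ^ 2 + 28) ^ p ≤ C := le_add_of_nonneg_right (by positivity)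
  have hpow : (1 + T) ^ p ≤ (1 + T) ^ C := Real.rpow_le_rpow_of_exponent_le (by linarith) hpC
  calc x ≤ 8 * B * (2 * L) ^ p := by linarith
    _ ≤ 8 * B * ((8 * p ^ 2 + 28) * (1 + T)) ^ p := by gcongr
    _ = 8 * (8 * p ^ 2 + 28) ^ p * B * (1 + T) ^ p := by
        rw [Real.mul_rpow (by positivity) (by positivity)]; ring
    _ ≤ C * B * (1 + T) ^ C :=
        mul_le_mul (mul_le_mul_of_nonneg_right hcoef (by linarith)) hpow (by positivity)
          (by nlinarith)

theorem stmt0 (ρ : ℝ) (hρ : 1 ≤ ρ) :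
    ∃ Cst : ℝ, ∀ (V : Type) [MetricSpace V] (k : ℕ) (z s : ℝ),
      1 ≤ k → 1 ≤ z → 2 ≤ s →
      (∀ (X : WSet V) (ε : ℝ), 0 < ε → ε < 1/4 →
        ∃ D : WSet V, IsCoreset k z ε X D ∧
          (D.pts.card : ℝ) ≤ s * ε ^ (-ρ) * Real.logb 2 (2 + (X.pts.card : ℝ))) →
      ∀ (X : WSet V) (ε : ℝ), 0 < ε → ε < 1/4 →
        ∃ D : WSet V, IsCoreset k z ε X D ∧
          (D.pts.card : ℝ) ≤ Cst * (s * ε ^ (-ρ)) * (1 + Real.logb 2 (s * ε ^ (-ρ))) ^ Cst := by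
  refine ⟨bootstrapConst (2 * ρ + 1), fun V _ k z s _ _ hs oracle X ε hε hε4 => ?_⟩
  have hB : 2 ≤ s * ε ^ (-ρ) := by
    nlinarith [Real.one_le_rpow_of_pos_of_le_one_of_nonpos hε (by linarith) (by linarith : -ρ ≤ 0)]
  have hstep (Y : WSet V) := oracle Y (ε / (2 * Real.log (4 + Y.pts.card) ^ 2))
    (by have := one_le_log_four_add (Nat.cast_nonneg (α := ℝ) Y.pts.card); positivity)
    (by
      have := one_le_log_four_add (Nat.cast_nonneg (α := ℝ) Y.pts.card)
      rw [div_lt_iff₀ (by positivity)]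
      nlinarith)
  have hX := one_le_log_four_add (Nat.cast_nonneg (α := ℝ) X.pts.card)
  obtain ⟨D, hD, hstop⟩ := exists_isCoreset_log_lt_log_add_one
    (fun m => s * (ε / (2 * Real.log (4 + m) ^ 2)) ^ (-ρ) * Real.logb 2 (2 + m)) hε (by linarith)
    hstep X ε (mul_le_of_le_one_right hε.le (sub_le_self _ (by positivity))) le_rfl
  exact ⟨D, hD, le_bootstrapConst_mul (Nat.cast_nonneg _) (by linarith) (by linarith)
    (four_add_le_of_log_lt_log_add_one hε (by linarith) (Nat.cast_nonneg _) hB hstop)⟩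
end

section
/- Let log denote the base-2 logarithm and log^{(i)} its i-th iterate (with log^{(0)} n = n). Let Γ ≥ 1 and n be reals and t ≥ 1 an integer such that log^{(t−1)} n ≥ 20·Γ. Suppose a₀, a₁, …, a_t are reals with a₀ = n, a_i ≥ 2 for all 0 ≤ i ≤ t, and a_i ≤ Γ·(log^{(i)} n)·(log a_{i−1})² for all 1 ≤ i ≤ t. Then a_i ≤ 20·Γ·(log^{(i)} n)³ for all 1 ≤ i ≤ t. -/
/-!
Write `L i = log^{(i)} n`. Positivity of `L i` for `1 ≤ i ≤ t` is forced by
`2 ≤ a i ≤ Γ · L i · (log a (i-1))²`; it cannot be read off from `L (t-1) ≥ 20Γ`, because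
`Real.logb 2 x = Real.logb 2 |x|`. With positivity, exponentiating back down (`x < 2 ^ x`) gives
`L i ≥ 20Γ` for `1 ≤ i < t`. The claim then follows by induction on `i`: from `a i ≤ 20Γ · (L i)³`
and `20Γ ≤ L i` we get `a i ≤ (L i)⁴`, so `log a i ≤ 4 L (i+1)`, and the recursion gives
`a (i+1) ≤ 16Γ · L (i+1)³`.
-/

/-- Iterated base-2 logarithm: `iterLog 0 n = n`, `iterLog (i+1) n = log₂ (iterLog i n)`. -/
noncomputable def iterLog : ℕ → ℝ → ℝ
  | 0, n => n
  | (i+1), n => Real.logb 2 (iterLog i n)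

open Real

lemma lt_two_rpow_self (x : ℝ) : x < 2 ^ x := by
  rcases le_or_gt x 0 with hx | hx
  · exact hx.trans_lt (rpow_pos_of_pos two_pos x)
  calc x < ⌊x⌋₊ + 1 := Nat.lt_floor_add_one x
    _ ≤ (2 : ℝ) ^ ⌊x⌋₊ := by exact_mod_cast Nat.lt_two_pow_self
    _ = 2 ^ (⌊x⌋₊ : ℝ) := (rpow_natCast 2 _).symm
    _ ≤ 2 ^ x := rpow_le_rpow_of_exponent_le one_le_two (Nat.floor_le hx.le)

lemma le_of_le_logb_two {c x : ℝ} (hx : 0 < x) (h : c ≤ logb 2 x) : c ≤ x :=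
  (lt_two_rpow_self c).le.trans ((le_logb_iff_rpow_le one_lt_two hx).1 h)

lemma le_iterLog_of_le_iterLog {c n : ℝ} {j k : ℕ} (hjk : j ≤ k)
    (hpos : ∀ i, j ≤ i → i < k → 0 < iterLog i n) (hk : c ≤ iterLog k n) :
    c ≤ iterLog j n := by
  induction k, hjk using Nat.le_induction with
  | base => exact hk
  | succ k hjk ih =>
    exact ih (fun i hji hik => hpos i hji (by omega))
      (le_of_le_logb_two (hpos k hjk k.lt_succ_self) hk)

lemma le_mul_logb_two_pow_three {Γ L a a' : ℝ} (hΓ : 1 ≤ Γ) (hL : 20 * Γ ≤ L) (ha : 1 ≤ a)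
    (haL : a ≤ 20 * Γ * L ^ 3) (ha' : a' ≤ Γ * logb 2 L * logb 2 a ^ 2) :
    a' ≤ 20 * Γ * logb 2 L ^ 3 := by
  have hL0 : 0 < L := by linarith
  have hlogL : 0 ≤ logb 2 L := logb_nonneg one_lt_two (by linarith)
  have hlog_a : logb 2 a ≤ 4 * logb 2 L :=
    calc logb 2 a ≤ logb 2 (L ^ 4) :=
          logb_le_logb_of_le one_lt_two (by linarith) (haL.trans (by nlinarith [pow_pos hL0 3]))
      _ = 4 * logb 2 L := by rw [logb_pow]; norm_num
  have hsq : logb 2 a ^ 2 ≤ (4 * logb 2 L) ^ 2 :=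
    pow_le_pow_left₀ (logb_nonneg one_lt_two ha) hlog_a 2
  calc a' ≤ Γ * logb 2 L * logb 2 a ^ 2 := ha'
    _ ≤ Γ * logb 2 L * (4 * logb 2 L) ^ 2 := by gcongr
    _ = 16 * Γ * logb 2 L ^ 3 := by ring
    _ ≤ 20 * Γ * logb 2 L ^ 3 := by nlinarith [pow_nonneg hlogL 3]

theorem stmt1_general (Γ n : ℝ) (hΓ : 1 ≤ Γ) (t : ℕ)
    (hn : 20 * Γ ≤ iterLog (t - 1) n)
    (a : ℕ → ℝ) (ha0 : a 0 = n)
    (ha2 : ∀ i ≤ t, 2 ≤ a i)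
    (hrec : ∀ i, 1 ≤ i → i ≤ t →
      a i ≤ Γ * iterLog i n * (Real.logb 2 (a (i - 1))) ^ 2) :
    ∀ i, 1 ≤ i → i ≤ t → a i ≤ 20 * Γ * (iterLog i n) ^ 3 := by
  have hpos : ∀ i, 1 ≤ i → i ≤ t → 0 < iterLog i n := fun i hi hit => by
    have hai := ha2 i hit
    have hrec_i := hrec i hi hit
    by_contra! h
    nlinarith [mul_nonneg (by linarith : (0 : ℝ) ≤ Γ) (sq_nonneg (logb 2 (a (i - 1))))]
  have hlarge : ∀ i, 1 ≤ i → i < t → 20 * Γ ≤ iterLog i n := fun i hi hit =>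
    le_iterLog_of_le_iterLog (by omega) (fun j hij hjt => hpos j (by omega) (by omega)) hn
  intro i hi
  induction i, hi using Nat.le_induction with
  | base =>
    intro h1t
    have h := hrec 1 le_rfl h1t
    rw [Nat.sub_self, ha0] at h
    change a 1 ≤ Γ * iterLog 1 n * iterLog 1 n ^ 2 at h
    nlinarith [pow_pos (hpos 1 le_rfl h1t) 3]
  | succ i hi ih =>
    intro hit
    exact le_mul_logb_two_pow_three hΓ (hlarge i hi hit) (by linarith [ha2 i (by omega)])
      (ih (by omega)) (hrec (i + 1) (by omega) hit)

theorem stmt1 (Γ n : ℝ) (hΓ : 1 ≤ Γ) (t : ℕ) (ht : 1 ≤ t)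
    (hn : 20 * Γ ≤ iterLog (t - 1) n)
    (a : ℕ → ℝ) (ha0 : a 0 = n)
    (ha2 : ∀ i ≤ t, 2 ≤ a i)
    (hrec : ∀ i, 1 ≤ i → i ≤ t →
      a i ≤ Γ * iterLog i n * (Real.logb 2 (a (i - 1))) ^ 2) :
    ∀ i, 1 ≤ i → i ≤ t → a i ≤ 20 * Γ * (iterLog i n) ^ 3 :=
  stmt1_general Γ n hΓ t hn a ha0 ha2 hrec
end

section
/- Fix a real z ≥ 1, an integer k ≥ 1, reals α, β ≥ 1, a metric space (V,d), and a weighted set X in V. Let C* ⊆ V be an (α,β)-approximate solution for (k,z)-clustering on X with cost_z(X,C*) > 0. Fix a map μ : X → C* with d(x,μ(x)) = d(x,C*) for every x ∈ X, and for x ∈ X put W(x) := Σ_{x'∈X : μ(x')=μ(x)} w_X(x'). Define σ̃_x := w_X(x)·( d(x,C*)^z / cost_z(X,C*) + 1/W(x) ). Then: (i) Σ_{x∈X} σ̃_x ≤ 1 + α·k; and (ii) for every x ∈ X and every nonempty C ⊆ V with |C| ≤ k and cost_z(X,C) > 0, w_X(x)·d(x,C)^z / cost_z(X,C) ≤ (β+1)·2^{2z−2}·σ̃_x.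 -/
/-!
Both bounds compare a point with the centre `μ x` of its cluster. Summing `w_X(x) / W(x)` over a
cluster gives `1`, so the second term of `σ̃` sums to the number of nonempty clusters, at most
`|C*| ≤ α k`, while the first term sums to `1`. For (ii), the relaxed triangle inequality
`(a + b)^z ≤ 2^(z-1) (a^z + b^z)` splits `d(x, C)^z` into `d(x, C*)^z`, controlled by
`cost(X, C*) ≤ β cost(X, C)`, and `d(μ x, C)^z`. Routing the latter through every point `x'` of
the cluster of `x` and averaging with the weights gives
`W(x) d(μ x, C)^z ≤ 2^(z-1) (cost(X, C*) + cost(X, C)) ≤ 2^(z-1) (β + 1) cost(X, C)`.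
-/

open Finset

/-- `Cs` is an `(α,β)`-approximate solution for `(k,z)`-clustering on `X`. -/
def IsApprox {V : Type*} [MetricSpace V] (k : ℕ) (z α β : ℝ) (X : WSet V)
    (Cs : Finset V) : Prop :=
  Cs.Nonempty ∧ (Cs.card : ℝ) ≤ α * k ∧
  ∀ C : Finset V, C.Nonempty → C.card ≤ k → costz z X Cs ≤ β * costz z X C

open Metric

theorem Real.rpow_add_le_mul_rpow_add_rpow {a b p : ℝ} (ha : 0 ≤ a) (hb : 0 ≤ b) (hp : 1 ≤ p) :
    (a + b) ^ p ≤ 2 ^ (p - 1) * (a ^ p + b ^ p) := by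
  lift a to NNReal using ha
  lift b to NNReal using hb
  exact_mod_cast NNReal.rpow_add_le_mul_rpow_add_rpow a b hp

theorem Metric.infDist_rpow_le {V : Type*} [PseudoMetricSpace V] {p : ℝ} (hp : 1 ≤ p)
    (s : Set V) (x y : V) :
    infDist x s ^ p ≤ 2 ^ (p - 1) * (dist x y ^ p + infDist y s ^ p) := by
  have htriangle : infDist x s ≤ dist x y + infDist y s := by
    linarith [infDist_le_infDist_add_dist (s := s) (x := x) (y := y)]
  calc infDist x s ^ p ≤ (dist x y + infDist y s) ^ p :=
        Real.rpow_le_rpow infDist_nonneg htriangle (by linarith)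
    _ ≤ _ := Real.rpow_add_le_mul_rpow_add_rpow dist_nonneg infDist_nonneg hp

namespace WSet

variable {V : Type*} (X : WSet V)

def fiberWeight {ι : Type*} [DecidableEq ι] (μ : V → ι) (x : V) : ℝ :=
  ∑ x' ∈ X.pts.filter (fun x' => μ x' = μ x), X.w x'

variable {X}

theorem fiberWeight_pos {ι : Type*} [DecidableEq ι] (μ : V → ι) {x : V} (hx : x ∈ X.pts) :
    0 < X.fiberWeight μ x :=
  sum_pos' (fun x' hx' => (X.pos x' (mem_filter.mp hx').1).le)
    ⟨x, mem_filter.mpr ⟨hx, rfl⟩, X.pos x hx⟩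

theorem sum_w_div_fiberWeight {ι : Type*} [DecidableEq ι] (μ : V → ι) :
    ∑ x ∈ X.pts, X.w x / X.fiberWeight μ x = #(X.pts.image μ) := by
  have hcluster : ∀ c ∈ X.pts.image μ,
      ∑ x ∈ X.pts with μ x = c, X.w x / X.fiberWeight μ x = 1 := by
    intro c hc
    obtain ⟨x₀, hx₀, rfl⟩ := mem_image.mp hc
    have hW : ∀ x ∈ X.pts.filter (μ · = μ x₀), X.fiberWeight μ x = X.fiberWeight μ x₀ := by
      intro x hx
      simp only [fiberWeight, (mem_filter.mp hx).2]
    rw [sum_congr rfl fun x hx => by rw [hW x hx], ← sum_div]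
    exact div_self (X.fiberWeight_pos μ hx₀).ne'
  rw [← sum_fiberwise_of_maps_to fun x hx => mem_image_of_mem μ hx, sum_congr rfl hcluster,
    sum_const, nsmul_one]

section Metric

variable [MetricSpace V]

theorem w_mul_infDist_rpow_nonneg {z : ℝ} {C : Finset V} {x : V} (hx : x ∈ X.pts) :
    0 ≤ X.w x * infDist x (C : Set V) ^ z :=
  mul_nonneg (X.pos x hx).le (Real.rpow_nonneg infDist_nonneg z)

theorem costz_nonneg (z : ℝ) (C : Finset V) : 0 ≤ costz z X C :=
  sum_nonneg fun _ hx => w_mul_infDist_rpow_nonneg hx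

theorem sum_filter_le_costz (z : ℝ) (C : Finset V) (q : V → Prop) [DecidablePred q] :
    ∑ x ∈ X.pts with q x, X.w x * infDist x (C : Set V) ^ z ≤ costz z X C :=
  sum_le_sum_of_subset_of_nonneg (filter_subset _ _) fun _ hx _ => w_mul_infDist_rpow_nonneg hx

variable [DecidableEq V] {z : ℝ} {Cs : Finset V} {μ : V → V}

theorem sum_sensitivity_le_one_add_card (hcost : costz z X Cs ≠ 0)
    (hμmem : ∀ x ∈ X.pts, μ x ∈ Cs) :
    ∑ x ∈ X.pts, X.w x * (infDist x (Cs : Set V) ^ z / costz z X Cs + 1 / X.fiberWeight μ x)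
      ≤ 1 + #Cs := by
  have hsplit : ∑ x ∈ X.pts,
        X.w x * (infDist x (Cs : Set V) ^ z / costz z X Cs + 1 / X.fiberWeight μ x)
      = costz z X Cs / costz z X Cs + ∑ x ∈ X.pts, X.w x / X.fiberWeight μ x := by
    rw [costz, sum_div, ← sum_add_distrib]
    exact sum_congr rfl fun x _ => by ring
  have hclusters : #(X.pts.image μ) ≤ #Cs :=
    card_le_card fun c hc => by
      obtain ⟨x, hx, rfl⟩ := mem_image.mp hc
      exact hμmem x hx
  rw [hsplit, div_self hcost, sum_w_div_fiberWeight]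
  exact_mod_cast Nat.add_le_add_left hclusters 1

variable (hμ : ∀ x ∈ X.pts, dist x (μ x) = infDist x (Cs : Set V))
include hμ

theorem fiberWeight_mul_infDist_rpow_le (hz : 1 ≤ z) (C : Finset V) (x : V) :
    X.fiberWeight μ x * infDist (μ x) (C : Set V) ^ z
      ≤ 2 ^ (z - 1) * (costz z X Cs + costz z X C) := by
  set F := X.pts.filter fun x' => μ x' = μ x
  have hpoint : ∀ x' ∈ F, X.w x' * infDist (μ x) (C : Set V) ^ z
      ≤ 2 ^ (z - 1) * (X.w x' * infDist x' (Cs : Set V) ^ z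
        + X.w x' * infDist x' (C : Set V) ^ z) := by
    intro x' hx'
    obtain ⟨hx'X, hx'μ⟩ := mem_filter.mp hx'
    have hdist : dist (μ x) x' = infDist x' (Cs : Set V) := by
      rw [dist_comm, ← hx'μ, hμ x' hx'X]
    have := infDist_rpow_le hz (C : Set V) (μ x) x'
    rw [hdist] at this
    calc X.w x' * infDist (μ x) (C : Set V) ^ z
        ≤ X.w x' * (2 ^ (z - 1) * (infDist x' (Cs : Set V) ^ z + infDist x' (C : Set V) ^ z)) :=
          mul_le_mul_of_nonneg_left this (X.pos x' hx'X).le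
      _ = _ := by ring
  calc X.fiberWeight μ x * infDist (μ x) (C : Set V) ^ z
      = ∑ x' ∈ F, X.w x' * infDist (μ x) (C : Set V) ^ z := sum_mul _ _ _
    _ ≤ ∑ x' ∈ F, 2 ^ (z - 1) * (X.w x' * infDist x' (Cs : Set V) ^ z
        + X.w x' * infDist x' (C : Set V) ^ z) := sum_le_sum hpoint
    _ = 2 ^ (z - 1) * (∑ x' ∈ F, X.w x' * infDist x' (Cs : Set V) ^ z
        + ∑ x' ∈ F, X.w x' * infDist x' (C : Set V) ^ z) := by
          rw [← mul_sum, sum_add_distrib]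
    _ ≤ 2 ^ (z - 1) * (costz z X Cs + costz z X C) := by
          gcongr <;> exact sum_filter_le_costz _ _ _

theorem w_mul_infDist_rpow_div_costz_le (hz : 1 ≤ z) {β : ℝ} (hcost : 0 < costz z X Cs)
    {x : V} (hx : x ∈ X.pts) {C : Finset V} (hC : 0 < costz z X C)
    (hCs : costz z X Cs ≤ β * costz z X C) :
    X.w x * infDist x (C : Set V) ^ z / costz z X C
      ≤ (β + 1) * 2 ^ (2 * z - 2) *
        (X.w x * (infDist x (Cs : Set V) ^ z / costz z X Cs + 1 / X.fiberWeight μ x)) := by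
  set E : ℝ := 2 ^ (z - 1)
  set w := X.w x
  set W := X.fiberWeight μ x
  set A := infDist x (Cs : Set V) ^ z
  set B := infDist (μ x) (C : Set V) ^ z
  have hβ : 0 ≤ β := nonneg_of_mul_nonneg_left ((X.costz_nonneg z Cs).trans hCs) hC
  have hE : 1 ≤ E := Real.one_le_rpow one_le_two (by linarith)
  have hEE : (2 : ℝ) ^ (2 * z - 2) = E * E := by
    rw [← Real.rpow_add two_pos]; ring_nf
  have hw := X.pos x hx
  have hW := X.fiberWeight_pos μ hx
  have hA : 0 ≤ A := Real.rpow_nonneg infDist_nonneg z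
  have hsplit : infDist x (C : Set V) ^ z ≤ E * (A + B) := by
    simpa only [hμ x hx] using infDist_rpow_le hz (C : Set V) x (μ x)
  have hnear : w * A / costz z X C ≤ β * (w * A / costz z X Cs) := by
    rw [div_le_iff₀ hC, mul_div_assoc', div_mul_eq_mul_div, le_div_iff₀ hcost]
    nlinarith [mul_nonneg hw.le hA]
  have hfar : w * B / costz z X C ≤ E * (β + 1) * (w / W) := by
    have hcluster : W * B ≤ E * (β + 1) * costz z X C := by
      nlinarith [X.fiberWeight_mul_infDist_rpow_le hμ hz C x]
    rw [div_le_iff₀ hC, mul_div_assoc', div_mul_eq_mul_div, le_div_iff₀ hW]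
    nlinarith
  calc w * infDist x (C : Set V) ^ z / costz z X C
      ≤ w * (E * (A + B)) / costz z X C := by gcongr
    _ = E * (w * A / costz z X C) + E * (w * B / costz z X C) := by ring
    _ ≤ E * (β * (w * A / costz z X Cs)) + E * (E * (β + 1) * (w / W)) := by gcongr
    _ ≤ (β + 1) * (E * E) * (w * A / costz z X Cs) + (β + 1) * (E * E) * (w / W) := by
          have hcoef : E * β ≤ (β + 1) * (E * E) := by
            nlinarith [mul_nonneg (mul_nonneg (by linarith : (0 : ℝ) ≤ E) (sub_nonneg.2 hE)) hβ]
          have := mul_le_mul_of_nonneg_right hcoef (by positivity : 0 ≤ w * A / costz z X Cs)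
          linarith
    _ = _ := by rw [hEE]; ring

end Metric

end WSet

theorem stmt5_general {V : Type*} [MetricSpace V] [DecidableEq V]
    (z : ℝ) (hz : 1 ≤ z) (k : ℕ)
    (α β : ℝ)
    (X : WSet V) (Cs : Finset V) (happrox : IsApprox k z α β X Cs)
    (hcost : 0 < costz z X Cs)
    (μ : V → V) (hμmem : ∀ x ∈ X.pts, μ x ∈ Cs)
    (hμ : ∀ x ∈ X.pts, dist x (μ x) = Metric.infDist x (Cs : Set V))
    (W : V → ℝ)
    (hW : ∀ x ∈ X.pts, W x = ∑ x' ∈ X.pts.filter (fun x' => μ x' = μ x), X.w x')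
    (σ : V → ℝ)
    (hσ : ∀ x ∈ X.pts, σ x =
      X.w x * (Metric.infDist x (Cs : Set V) ^ z / costz z X Cs + 1 / W x)) :
    (∑ x ∈ X.pts, σ x) ≤ 1 + α * k ∧
    ∀ x ∈ X.pts, ∀ C : Finset V, C.Nonempty → C.card ≤ k → 0 < costz z X C →
      X.w x * Metric.infDist x (C : Set V) ^ z / costz z X C ≤
        (β + 1) * (2 : ℝ) ^ (2 * z - 2) * σ x := by
  obtain ⟨-, hCscard, hCsopt⟩ := happrox
  have hσW : ∀ x ∈ X.pts, σ x = X.w x *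
      (infDist x (Cs : Set V) ^ z / costz z X Cs + 1 / X.fiberWeight μ x) := fun x hx => by
    rw [hσ x hx, hW x hx, WSet.fiberWeight]
  refine ⟨?_, fun x hx C hC hCk hCpos => ?_⟩
  · rw [sum_congr rfl hσW]
    linarith [X.sum_sensitivity_le_one_add_card hcost.ne' hμmem]
  · rw [hσW x hx]
    exact X.w_mul_infDist_rpow_div_costz_le hμ hz hcost hx hCpos (hCsopt C hC hCk)

theorem stmt5 {V : Type*} [MetricSpace V] [DecidableEq V]
    (z : ℝ) (hz : 1 ≤ z) (k : ℕ) (hk : 1 ≤ k)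
    (α β : ℝ) (hα : 1 ≤ α) (hβ : 1 ≤ β)
    (X : WSet V) (Cs : Finset V) (happrox : IsApprox k z α β X Cs)
    (hcost : 0 < costz z X Cs)
    (μ : V → V) (hμmem : ∀ x ∈ X.pts, μ x ∈ Cs)
    (hμ : ∀ x ∈ X.pts, dist x (μ x) = Metric.infDist x (Cs : Set V))
    (W : V → ℝ)
    (hW : ∀ x ∈ X.pts, W x = ∑ x' ∈ X.pts.filter (fun x' => μ x' = μ x), X.w x')
    (σ : V → ℝ)
    (hσ : ∀ x ∈ X.pts, σ x =
      X.w x * (Metric.infDist x (Cs : Set V) ^ z / costz z X Cs + 1 / W x)) :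
    (∑ x ∈ X.pts, σ x) ≤ 1 + α * k ∧
    ∀ x ∈ X.pts, ∀ C : Finset V, C.Nonempty → C.card ≤ k → 0 < costz z X C →
      X.w x * Metric.infDist x (C : Set V) ^ z / costz z X C ≤
        (β + 1) * (2 : ℝ) ^ (2 * z - 2) * σ x :=
  stmt5_general z hz k α β X Cs happrox hcost μ hμmem hμ W hW σ hσ
end

section
/- Let (V,d) be a metric space, k ≥ 1 an integer, α, β ≥ 1 and ε > 0 reals, X a weighted set in V, and let C* be an (α,β)-approximate solution for (k,1)-clustering (k-Median) on X. Suppose (f_x)_{x∈X} is a family of functions f_x : V → ℝ satisfying d(x,c) ≤ f_x(c) ≤ (1+ε)·d(x,c) + ε·d(x,C*) for all x ∈ X and c ∈ V. Then for every nonempty C ⊆ V with |C| ≤ k, cost(X,C) ≤ Σ_{x∈X} w_X(x)·min_{c∈C} f_x(c) ≤ (1 + (β+1)·ε)·cost(X,C). -/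
/-! The lower bound is pointwise, `d(x, C) ≤ min_{c ∈ C} f_x(c)`. For the upper bound, evaluate
`f_x` at a nearest centre `c ∈ C` of `x`: this gives `(1 + ε) d(x, C) + ε d(x, C*)`, so the
weighted sum is at most `(1 + ε) cost(X, C) + ε cost(X, C*)`, and `cost(X, C*) ≤ β cost(X, C)`. -/

open Finset

/-- The k-Median cost `cost(X, C) = Σ_{x ∈ X} w_X(x) · d(x, C)`. -/
noncomputable def cost1 {V : Type*} [MetricSpace V] (X : WSet V) (C : Finset V) : ℝ :=
  ∑ x ∈ X.pts, X.w x * Metric.infDist x (C : Set V)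

/-- `Cs` is an `(α,β)`-approximate solution for `(k,1)`-clustering (k-Median) on `X`. -/
def IsApprox1 {V : Type*} [MetricSpace V] (k : ℕ) (α β : ℝ) (X : WSet V)
    (Cs : Finset V) : Prop :=
  Cs.Nonempty ∧ (Cs.card : ℝ) ≤ α * k ∧
  ∀ C : Finset V, C.Nonempty → C.card ≤ k → cost1 X Cs ≤ β * cost1 X C

theorem WSet.weighted_sum_le {V : Type*} (X : WSet V) {g h : V → ℝ}
    (hgh : ∀ x ∈ X.pts, g x ≤ h x) :
    ∑ x ∈ X.pts, X.w x * g x ≤ ∑ x ∈ X.pts, X.w x * h x :=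
  sum_le_sum fun x hx => mul_le_mul_of_nonneg_left (hgh x hx) (X.pos x hx).le

section

variable {V : Type*} [PseudoMetricSpace V]

theorem Metric.infDist_le_finset_inf' {x : V} {C : Finset V} (hC : C.Nonempty) {f : V → ℝ}
    (hf : ∀ c ∈ C, dist x c ≤ f c) : Metric.infDist x (C : Set V) ≤ C.inf' hC f :=
  Finset.le_inf' _ _ fun c hc => (Metric.infDist_le_dist_of_mem (mem_coe.2 hc)).trans (hf c hc)

theorem Finset.inf'_le_mul_infDist_add {x : V} {C : Finset V} (hC : C.Nonempty) {f : V → ℝ}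
    {a b : ℝ} (hf : ∀ c ∈ C, f c ≤ a * dist x c + b) :
    C.inf' hC f ≤ a * Metric.infDist x (C : Set V) + b := by
  obtain ⟨c, hc, hnearest⟩ :=
    C.finite_toSet.isCompact.exists_infDist_eq_dist (coe_nonempty.2 hC) x
  rw [hnearest]
  exact (C.inf'_le f hc).trans (hf c hc)

end

section

variable {V : Type*} [MetricSpace V]

theorem cost1_le_sum_inf' (X : WSet V) {C : Finset V} (hC : C.Nonempty) {f : V → V → ℝ}
    (hf : ∀ x ∈ X.pts, ∀ c ∈ C, dist x c ≤ f x c) :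
    cost1 X C ≤ ∑ x ∈ X.pts, X.w x * C.inf' hC (f x) :=
  X.weighted_sum_le fun x hx => Metric.infDist_le_finset_inf' hC (hf x hx)

theorem sum_inf'_le_mul_cost1_add_mul_cost1 (X : WSet V) {C : Finset V} (hC : C.Nonempty)
    (D : Finset V) {f : V → V → ℝ} {a b : ℝ}
    (hf : ∀ x ∈ X.pts, ∀ c ∈ C, f x c ≤ a * dist x c + b * Metric.infDist x (D : Set V)) :
    ∑ x ∈ X.pts, X.w x * C.inf' hC (f x) ≤ a * cost1 X C + b * cost1 X D := by
  calc ∑ x ∈ X.pts, X.w x * C.inf' hC (f x)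
      ≤ ∑ x ∈ X.pts, X.w x *
          (a * Metric.infDist x (C : Set V) + b * Metric.infDist x (D : Set V)) :=
        X.weighted_sum_le fun x hx => Finset.inf'_le_mul_infDist_add hC (hf x hx)
    _ = a * cost1 X C + b * cost1 X D := by
        simp only [cost1, mul_sum, ← sum_add_distrib]
        exact sum_congr rfl fun x _ => by ring

end

theorem stmt7_general {V : Type*} [MetricSpace V] (k : ℕ)
    (α β ε : ℝ) (hε : 0 < ε)
    (X : WSet V) (Cs : Finset V) (happrox : IsApprox1 k α β X Cs)
    (f : V → V → ℝ)
    (hf : ∀ x ∈ X.pts, ∀ c : V,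
      dist x c ≤ f x c ∧ f x c ≤ (1 + ε) * dist x c + ε * Metric.infDist x (Cs : Set V)) :
    ∀ (C : Finset V) (hC : C.Nonempty), C.card ≤ k →
      cost1 X C ≤ (∑ x ∈ X.pts, X.w x * C.inf' hC (f x)) ∧
      (∑ x ∈ X.pts, X.w x * C.inf' hC (f x)) ≤ (1 + (β + 1) * ε) * cost1 X C := by
  intro C hC hCk
  refine ⟨cost1_le_sum_inf' X hC fun x hx c _ => (hf x hx c).1, ?_⟩
  calc ∑ x ∈ X.pts, X.w x * C.inf' hC (f x)
      ≤ (1 + ε) * cost1 X C + ε * cost1 X Cs :=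
        sum_inf'_le_mul_cost1_add_mul_cost1 X hC Cs fun x hx c _ => (hf x hx c).2
    _ ≤ (1 + ε) * cost1 X C + ε * (β * cost1 X C) := by
        gcongr
        exact happrox.2.2 C hC hCk
    _ = (1 + (β + 1) * ε) * cost1 X C := by ring

theorem stmt7 {V : Type*} [MetricSpace V] (k : ℕ) (hk : 1 ≤ k)
    (α β ε : ℝ) (hα : 1 ≤ α) (hβ : 1 ≤ β) (hε : 0 < ε)
    (X : WSet V) (Cs : Finset V) (happrox : IsApprox1 k α β X Cs)
    (f : V → V → ℝ)
    (hf : ∀ x ∈ X.pts, ∀ c : V,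
      dist x c ≤ f x c ∧ f x c ≤ (1 + ε) * dist x c + ε * Metric.infDist x (Cs : Set V)) :
    ∀ (C : Finset V) (hC : C.Nonempty), C.card ≤ k →
      cost1 X C ≤ (∑ x ∈ X.pts, X.w x * C.inf' hC (f x)) ∧
      (∑ x ∈ X.pts, X.w x * C.inf' hC (f x)) ≤ (1 + (β + 1) * ε) * cost1 X C :=
  stmt7_general k α β ε hε X Cs happrox f hf
end

section
/- Let (V,d) be a metric space, k ≥ 1 an integer, z ≥ 1 a real, ε ∈ (0,1/2), and X a weighted set in V. Suppose (f_x)_{x∈X} is a family of functions f_x : V → [0,∞) satisfying d(x,c) ≤ f_x(c) ≤ (1+ε)·d(x,c) for all x ∈ X and c ∈ V, and write G(C) := Σ_{x∈X} w_X(x)·(min_{c∈C} f_x(c))^z. Let D be a weighted set with D ⊆ X such that for every nonempty C ⊆ V with |C| ≤ k, (1−ε)·G(C) ≤ Σ_{x∈D} w_D(x)·(min_{c∈C} f_x(c))^z ≤ (1+ε)·G(C). Then for every nonempty C ⊆ V with |C| ≤ k, (1−ε)·(1+ε)^{−z}·cost_z(X,C) ≤ cost_z(D,C) ≤ (1+ε)^{z+1}·cost_z(X,C).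 -/
/-!
Since `d(x, c) ≤ f_x(c) ≤ (1 + ε) d(x, c)`, the proxy distance `min_{c ∈ C} f_x(c)` lies between
`d(x, C)` and `(1 + ε) d(x, C)`. Hence for every weighted set the proxy cost `G` is sandwiched
between `cost_z` and `(1 + ε)^z cost_z`, and composing these sandwiches for `X` and `D` with the
guarantee of `D` for `G` costs one extra factor `(1 + ε)^z` on each side.
-/

open Finset

section WeightedRpowSums

variable {ι : Type*} {s : Finset ι} {w u v : ι → ℝ} {z : ℝ}

theorem sum_mul_rpow_le_sum_mul_rpow (hz : 0 ≤ z) (hw : ∀ i ∈ s, 0 ≤ w i)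
    (hu : ∀ i ∈ s, 0 ≤ u i) (huv : ∀ i ∈ s, u i ≤ v i) :
    ∑ i ∈ s, w i * u i ^ z ≤ ∑ i ∈ s, w i * v i ^ z :=
  sum_le_sum fun i hi =>
    mul_le_mul_of_nonneg_left (Real.rpow_le_rpow (hu i hi) (huv i hi) hz) (hw i hi)

theorem sum_mul_rpow_le_rpow_mul_sum {a : ℝ} (ha : 0 ≤ a) (hz : 0 ≤ z)
    (hw : ∀ i ∈ s, 0 ≤ w i) (hu : ∀ i ∈ s, 0 ≤ u i) (hv : ∀ i ∈ s, 0 ≤ v i)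
    (hvu : ∀ i ∈ s, v i ≤ a * u i) :
    ∑ i ∈ s, w i * v i ^ z ≤ a ^ z * ∑ i ∈ s, w i * u i ^ z :=
  calc ∑ i ∈ s, w i * v i ^ z ≤ ∑ i ∈ s, w i * (a * u i) ^ z :=
        sum_mul_rpow_le_sum_mul_rpow hz hw hv hvu
    _ = a ^ z * ∑ i ∈ s, w i * u i ^ z := by
        rw [mul_sum]
        refine sum_congr rfl fun i hi => ?_
        rw [Real.mul_rpow ha (hu i hi)]
        ring

end WeightedRpowSums

section ProxyDistance

variable {V : Type*} [MetricSpace V] {C : Finset V} {x : V} {g : V → ℝ} {a : ℝ}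

theorem infDist_le_inf' (hC : C.Nonempty) (hg : ∀ c ∈ C, dist x c ≤ g c) :
    Metric.infDist x (C : Set V) ≤ C.inf' hC g := by
  obtain ⟨c, hc, hgc⟩ := C.exists_mem_eq_inf' hC g
  calc Metric.infDist x (C : Set V) ≤ dist x c := Metric.infDist_le_dist_of_mem (mem_coe.2 hc)
    _ ≤ g c := hg c hc
    _ = C.inf' hC g := hgc.symm

theorem inf'_le_mul_infDist (hC : C.Nonempty) (hg : ∀ c ∈ C, g c ≤ a * dist x c) :
    C.inf' hC g ≤ a * Metric.infDist x (C : Set V) := by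
  obtain ⟨c, hc, hxc⟩ :=
    C.finite_toSet.isCompact.exists_infDist_eq_dist (coe_nonempty.2 hC) x
  calc C.inf' hC g ≤ g c := inf'_le g (mem_coe.1 hc)
    _ ≤ a * dist x c := hg c (mem_coe.1 hc)
    _ = a * Metric.infDist x (C : Set V) := by rw [hxc]

end ProxyDistance

section ProxyCost

variable {V : Type*} [MetricSpace V] {z a : ℝ} {f : V → V → ℝ} {Y : WSet V} {C : Finset V}

/-- The paper's `G(C)`: `cost_z` with `d(x, C)` replaced by `min_{c ∈ C} f x c`. -/
noncomputable def proxyCost (z : ℝ) (f : V → V → ℝ) (Y : WSet V) (C : Finset V)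
    (hC : C.Nonempty) : ℝ :=
  ∑ x ∈ Y.pts, Y.w x * C.inf' hC (f x) ^ z

theorem costz_le_proxyCost (hz : 0 ≤ z) (hC : C.Nonempty)
    (hf : ∀ x ∈ Y.pts, ∀ c ∈ C, dist x c ≤ f x c) :
    costz z Y C ≤ proxyCost z f Y C hC :=
  sum_mul_rpow_le_sum_mul_rpow hz (fun x hx => (Y.pos x hx).le)
    (fun _ _ => Metric.infDist_nonneg) fun x hx => infDist_le_inf' hC (hf x hx)

theorem proxyCost_le_rpow_mul_costz (ha : 0 ≤ a) (hz : 0 ≤ z) (hC : C.Nonempty)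
    (hf : ∀ x ∈ Y.pts, ∀ c ∈ C, dist x c ≤ f x c ∧ f x c ≤ a * dist x c) :
    proxyCost z f Y C hC ≤ a ^ z * costz z Y C :=
  sum_mul_rpow_le_rpow_mul_sum ha hz (fun x hx => (Y.pos x hx).le)
    (fun _ _ => Metric.infDist_nonneg)
    (fun x hx => Metric.infDist_nonneg.trans (infDist_le_inf' hC fun c hc => (hf x hx c hc).1))
    fun x hx => inf'_le_mul_infDist hC fun c hc => (hf x hx c hc).2

end ProxyCost

theorem stmt10_general {V : Type*} [MetricSpace V] (k : ℕ)
    (z ε : ℝ) (hz : 1 ≤ z) (hε0 : 0 < ε) (hε1 : ε < 1/2)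
    (X : WSet V)
    (f : V → V → ℝ)
    (hf : ∀ x ∈ X.pts, ∀ c : V, dist x c ≤ f x c ∧ f x c ≤ (1 + ε) * dist x c)
    (D : WSet V) (hDX : D.pts ⊆ X.pts)
    (hD : ∀ (C : Finset V) (hC : C.Nonempty), C.card ≤ k →
      (1 - ε) * (∑ x ∈ X.pts, X.w x * (C.inf' hC (f x)) ^ z) ≤
        (∑ x ∈ D.pts, D.w x * (C.inf' hC (f x)) ^ z) ∧
      (∑ x ∈ D.pts, D.w x * (C.inf' hC (f x)) ^ z) ≤
        (1 + ε) * (∑ x ∈ X.pts, X.w x * (C.inf' hC (f x)) ^ z)) :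
    ∀ C : Finset V, C.Nonempty → C.card ≤ k →
      (1 - ε) * (1 + ε) ^ (-z) * costz z X C ≤ costz z D C ∧
      costz z D C ≤ (1 + ε) ^ (z + 1) * costz z X C := by
  intro C hC hCk
  obtain ⟨hDlower, hDupper⟩ := hD C hC hCk
  have hz0 : 0 ≤ z := by linarith
  have hε : 0 < 1 + ε := by linarith
  have hfX : ∀ x ∈ X.pts, ∀ c ∈ C, dist x c ≤ f x c ∧ f x c ≤ (1 + ε) * dist x c :=
    fun x hx c _ => hf x hx c
  have hfD : ∀ x ∈ D.pts, ∀ c ∈ C, dist x c ≤ f x c ∧ f x c ≤ (1 + ε) * dist x c :=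
    fun x hx => hfX x (hDX hx)
  have hcostX := costz_le_proxyCost hz0 hC fun x hx c hc => (hfX x hx c hc).1
  have hproxyX := proxyCost_le_rpow_mul_costz hε.le hz0 hC hfX
  have hcostD := costz_le_proxyCost hz0 hC fun x hx c hc => (hfD x hx c hc).1
  have hproxyD := proxyCost_le_rpow_mul_costz hε.le hz0 hC hfD
  constructor
  · have : (1 - ε) * costz z X C ≤ (1 + ε) ^ z * costz z D C :=
      calc (1 - ε) * costz z X C ≤ (1 - ε) * proxyCost z f X C hC :=
            mul_le_mul_of_nonneg_left hcostX (by linarith)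
        _ ≤ proxyCost z f D C hC := hDlower
        _ ≤ (1 + ε) ^ z * costz z D C := hproxyD
    rw [Real.rpow_neg hε.le, mul_right_comm, ← div_eq_mul_inv,
      div_le_iff₀ (Real.rpow_pos_of_pos hε z)]
    linarith
  · calc costz z D C ≤ proxyCost z f D C hC := hcostD
      _ ≤ (1 + ε) * proxyCost z f X C hC := hDupper
      _ ≤ (1 + ε) * ((1 + ε) ^ z * costz z X C) := mul_le_mul_of_nonneg_left hproxyX hε.le
      _ = (1 + ε) ^ (z + 1) * costz z X C := by
          rw [Real.rpow_add_one hε.ne']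
          ring

theorem stmt10 {V : Type*} [MetricSpace V] (k : ℕ) (hk : 1 ≤ k)
    (z ε : ℝ) (hz : 1 ≤ z) (hε0 : 0 < ε) (hε1 : ε < 1/2)
    (X : WSet V)
    (f : V → V → ℝ)
    (hf0 : ∀ x ∈ X.pts, ∀ c : V, 0 ≤ f x c)
    (hf : ∀ x ∈ X.pts, ∀ c : V, dist x c ≤ f x c ∧ f x c ≤ (1 + ε) * dist x c)
    (D : WSet V) (hDX : D.pts ⊆ X.pts)
    (hD : ∀ (C : Finset V) (hC : C.Nonempty), C.card ≤ k →
      (1 - ε) * (∑ x ∈ X.pts, X.w x * (C.inf' hC (f x)) ^ z) ≤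
        (∑ x ∈ D.pts, D.w x * (C.inf' hC (f x)) ^ z) ∧
      (∑ x ∈ D.pts, D.w x * (C.inf' hC (f x)) ^ z) ≤
        (1 + ε) * (∑ x ∈ X.pts, X.w x * (C.inf' hC (f x)) ^ z)) :
    ∀ C : Finset V, C.Nonempty → C.card ≤ k →
      (1 - ε) * (1 + ε) ^ (-z) * costz z X C ≤ costz z D C ∧
      costz z D C ≤ (1 + ε) ^ (z + 1) * costz z X C :=
  stmt10_general k z ε hz hε0 hε1 X f hf D hDX hD
end

section
/- There exists an absolute constant C such that the following holds. Let T be a finite tree (a connected acyclic simple graph) in which every vertex has degree at most 3, and let R be a subset of the vertices of T. Then there exists a partition P of the vertex set of T such that: (i) every part S ∈ P induces a connected subgraph of T; (ii) every part S ∈ P satisfies |S ∩ R| ≤ 3; (iii) for every part S ∈ P, the number of edges of T with exactly one endpoint in S is at most 4; and (iv) the number of parts satisfies |P| ≤ (|R| + 2)^C. -/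
/-!
Root `T` at a vertex `r`. Call a vertex *key* if it is `r`, lies in `R`, or has at least two
children whose subtrees meet `R`. The subtree spanned by `R` and `r` has fewer edges than vertices
and its leaves lie in `R`, so it has at most `|R|` branch vertices and there are at most
`2|R| + 1` key vertices. Send every vertex to its nearest key ancestor; the fibres are connected
and meet `R` only in their key vertex `u`. An edge leaves the fibre of `u` either upwards from `u`
or downwards into a key vertex, and double counting the children whose subtrees meet `R` shows
that there are exactly as many of the latter as children of `u` whose subtrees meet `R`: at most
`deg u ≤ 3`.
-/

open Finset

namespace TreePartition

open SimpleGraph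

variable {V : Type*}

section Rooted

variable (T : SimpleGraph V) (r : V)

open Classical in
noncomputable def parent (v : V) : V :=
  if h : ∃ w, T.Adj v w ∧ T.dist r w + 1 = T.dist r v then h.choose else r

variable {T r}

lemma exists_adj_dist_add_one (hc : T.Connected) {v : V} (hv : v ≠ r) :
    ∃ w, T.Adj v w ∧ T.dist r w + 1 = T.dist r v := by
  obtain ⟨p, -, hlen⟩ := hc.exists_path_of_dist v r
  have hnil : ¬ p.Nil := Walk.not_nil_of_ne hv
  have hadj := p.adj_snd hnil
  have htail : T.dist r p.snd + 1 ≤ T.dist r v := by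
    have := dist_le p.tail
    have := p.length_tail_add_one hnil
    rw [dist_comm, T.dist_comm (u := r)]
    omega
  refine ⟨p.snd, hadj, ?_⟩
  rcases hadj.diff_dist_adj (u := r) with h | h | h <;> omega

lemma parent_spec (hc : T.Connected) {v : V} (hv : v ≠ r) :
    T.Adj v (parent T r v) ∧ T.dist r (parent T r v) + 1 = T.dist r v := by
  have h := exists_adj_dist_add_one hc hv
  rw [parent, dif_pos h]
  exact h.choose_spec

@[simp]
lemma parent_root : parent T r r = r := by
  rw [parent, dif_neg]
  rintro ⟨w, -, h⟩
  simp at h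

lemma eq_penultimate_of_adj_of_dist_add_one (hT : T.IsTree) {v w : V} {p : T.Walk r v}
    (hp : p.IsPath) (hadj : T.Adj v w) (hd : T.dist r w + 1 = T.dist r v) :
    w = p.penultimate := by
  obtain ⟨q, hq, hlen⟩ := hT.connected.exists_path_of_dist r w
  have hvq : v ∉ q.support := fun hv => by
    classical
    have := dist_le (q.takeUntil v hv)
    have := q.length_takeUntil_le_length hv
    omega
  exact hT.isAcyclic.eq_penultimate_of_adj_end hp hadj
    (hT.isAcyclic.mem_support_of_ne_mem_support_of_adj_of_isPath hp hq hadj hvq)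

lemma parent_eq_of_adj (hT : T.IsTree) {v w : V} (hadj : T.Adj v w)
    (hd : T.dist r w + 1 = T.dist r v) : parent T r v = w := by
  have hv : v ≠ r := by rintro rfl; simp at hd
  obtain ⟨p, hp, -⟩ := hT.connected.exists_path_of_dist r v
  obtain ⟨hadj', hd'⟩ := parent_spec hT.connected hv
  rw [eq_penultimate_of_adj_of_dist_add_one hT hp hadj hd,
    eq_penultimate_of_adj_of_dist_add_one hT hp hadj' hd']

lemma parent_eq_or_parent_eq_of_adj (hT : T.IsTree) {x y : V} (hadj : T.Adj x y) :
    (x ≠ r ∧ parent T r x = y) ∨ (y ≠ r ∧ parent T r y = x) := by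
  rcases hT.dist_eq_dist_add_one_of_adj r hadj with h | h
  · exact Or.inl ⟨by rintro rfl; simp at h, parent_eq_of_adj hT hadj h.symm⟩
  · exact Or.inr ⟨by rintro rfl; simp at h, parent_eq_of_adj hT hadj.symm h.symm⟩

variable (r) in
lemma induction_on_parent (hc : T.Connected) {P : V → Prop}
    (h : ∀ v, (v ≠ r → P (parent T r v)) → P v) (v : V) : P v := by
  induction hn : T.dist r v using Nat.strong_induction_on generalizing v with
  | _ n ih => exact h v fun hv => ih _ (by have := (parent_spec hc hv).2; omega) _ rfl

variable (T r) in
def HasDescendantIn (R : Finset V) (v : V) : Prop := ∃ x ∈ R, ∃ k, (parent T r)^[k] x = v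

lemma HasDescendantIn.of_mem {R : Finset V} {x : V} (hx : x ∈ R) : HasDescendantIn T r R x :=
  ⟨x, hx, 0, rfl⟩

lemma hasDescendantIn_parent {R : Finset V} {v : V} (h : HasDescendantIn T r R v) :
    HasDescendantIn T r R (parent T r v) := by
  obtain ⟨x, hx, k, rfl⟩ := h
  exact ⟨x, hx, k + 1, Function.iterate_succ_apply' _ _ _⟩

variable [Fintype V] [DecidableEq V]

variable (T r) in
noncomputable def children (u : V) : Finset V := {y | y ≠ r ∧ parent T r y = u}

lemma mem_children {u y : V} : y ∈ children T r u ↔ y ≠ r ∧ parent T r y = u := by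
  simp [children]

lemma card_children_le_degree [DecidableRel T.Adj] (hc : T.Connected) (u : V) :
    #(children T r u) ≤ T.degree u := by
  rw [← card_neighborFinset_eq_degree]
  refine card_le_card fun y hy => ?_
  obtain ⟨hyr, rfl⟩ := mem_children.1 hy
  exact (mem_neighborFinset _ _ _).2 (parent_spec hc hyr).1.symm

end Rooted

section KeyVertices

open scoped Classical

variable [Fintype V] [DecidableEq V] (T : SimpleGraph V) (r : V) (R : Finset V)

noncomputable def descChildren (u : V) : Finset V :=
  {y ∈ children T r u | HasDescendantIn T r R y}

/-- The root, the vertices of `R`, and the branch vertices of the subtree spanned by `R` and the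
root. -/
def IsKey (v : V) : Prop := v ∈ R ∨ v = r ∨ 2 ≤ #(descChildren T r R v)

noncomputable def keyVertices : Finset V := {v | IsKey T r R v}

noncomputable def keyAncestorAux : ℕ → V → V
  | 0, v => v
  | n + 1, v => if IsKey T r R v then v else keyAncestorAux n (parent T r v)

/-- The nearest key vertex among `v`, `parent v`, `parent (parent v)`, …; the fuel `dist r v`
suffices since the root is a key vertex. -/
noncomputable def keyAncestor (v : V) : V := keyAncestorAux T r R (T.dist r v) v

noncomputable def part (u : V) : Finset V := {v | keyAncestor T r R v = u}

variable {T r R}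

lemma mem_descChildren {u y : V} :
    y ∈ descChildren T r R u ↔ y ≠ r ∧ parent T r y = u ∧ HasDescendantIn T r R y := by
  simp [descChildren, mem_children, and_assoc]

lemma HasDescendantIn.of_mem_descChildren {u y : V} (hy : y ∈ descChildren T r R u) :
    HasDescendantIn T r R u := by
  obtain ⟨-, rfl, hyD⟩ := mem_descChildren.1 hy
  exact hasDescendantIn_parent hyD

lemma mem_keyVertices {v : V} : v ∈ keyVertices T r R ↔ IsKey T r R v := by
  simp [keyVertices]

lemma HasDescendantIn.descChildren_nonempty {v : V} (h : HasDescendantIn T r R v) (hv : v ∉ R) :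
    (descChildren T r R v).Nonempty := by
  obtain ⟨x, hx, k, hk⟩ := h
  induction k generalizing v with
  | zero => exact absurd (hk ▸ hx) hv
  | succ k ih =>
    rw [Function.iterate_succ_apply'] at hk
    by_cases hr : (parent T r)^[k] x = r
    · exact ih hv (hr.trans (by rwa [hr, parent_root] at hk))
    · exact ⟨_, mem_descChildren.2 ⟨hr, hk, x, hx, k, rfl⟩⟩

lemma isKey_root : IsKey T r R r := Or.inr (Or.inl rfl)

lemma IsKey.hasDescendantIn {v : V} (hk : IsKey T r R v) (hv : v ≠ r) :
    HasDescendantIn T r R v := by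
  rcases hk with hk | hk | hk
  · exact .of_mem hk
  · exact absurd hk hv
  · obtain ⟨y, hy⟩ := card_pos.1 (by omega : 0 < #(descChildren T r R v))
    exact .of_mem_descChildren hy

lemma card_descChildren_of_not_isKey {v : V} (hk : ¬ IsKey T r R v) :
    #(descChildren T r R v) = if HasDescendantIn T r R v then 1 else 0 := by
  simp only [IsKey, not_or, not_le] at hk
  split_ifs with hD
  · have := card_pos.2 (hD.descChildren_nonempty hk.1)
    omega
  · exact card_eq_zero.2 (eq_empty_of_forall_notMem fun y hy => hD (.of_mem_descChildren hy))

lemma sum_card_descChildren (S : Finset V) :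
    ∑ x ∈ S, #(descChildren T r R x) =
      #{y | y ≠ r ∧ HasDescendantIn T r R y ∧ parent T r y ∈ S} := by
  rw [card_eq_sum_card_fiberwise (f := parent T r) (t := S)
    fun y hy => (mem_filter.1 (mem_coe.1 hy)).2.2.2]
  refine sum_congr rfl fun x hx => congrArg card ?_
  ext y
  simp only [mem_descChildren, mem_filter, mem_univ, true_and]
  grind

lemma card_branch_le : #({v | 2 ≤ #(descChildren T r R v)} : Finset V) ≤ #R := by
  set D : Finset V := {v | HasDescendantIn T r R v}
  -- The subtree spanned by `R` and the root has fewer edges than vertices; its leaves lie in `R`.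
  have hedges : ∑ x ∈ D, #(descChildren T r R x) ≤ #D := by
    rw [sum_card_descChildren]
    exact card_le_card fun y => by simp +contextual [D]
  have hpoint : ∀ x ∈ D, 1 + (if 2 ≤ #(descChildren T r R x) then 1 else 0) ≤
      #(descChildren T r R x) + if x ∈ R then 1 else 0 := by
    intro x hx
    by_cases hxR : x ∈ R
    · simp only [hxR, if_true]; split_ifs <;> omega
    · have := card_pos.2 (HasDescendantIn.descChildren_nonempty (by simpa [D] using hx) hxR)
      simp only [hxR, if_false]; split_ifs <;> omega
  have hsum := sum_le_sum hpoint
  simp only [sum_add_distrib, sum_const, smul_eq_mul, mul_one, sum_boole, Nat.cast_id] at hsum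
  have hbranch : ({v | 2 ≤ #(descChildren T r R v)} : Finset V) ⊆
      {x ∈ D | 2 ≤ #(descChildren T r R x)} := by
    intro v hv
    simp only [mem_filter, mem_univ, true_and, D] at hv ⊢
    exact ⟨.of_mem_descChildren (card_pos.1 (by omega)).choose_spec, hv⟩
  have := card_le_card hbranch
  have := card_le_card (show {x ∈ D | x ∈ R} ⊆ R from fun x hx => (mem_filter.1 hx).2)
  omega

lemma card_keyVertices_le : #(keyVertices T r R) ≤ 2 * #R + 1 := by
  have hB := card_branch_le (T := T) (r := r) (R := R)
  set B : Finset V := {v | 2 ≤ #(descChildren T r R v)}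
  have hsub : keyVertices T r R ⊆ insert r (R ∪ B) := by
    intro v hv
    rw [mem_keyVertices, IsKey] at hv
    simp only [mem_insert, mem_union, mem_filter, mem_univ, true_and, B]
    tauto
  calc #(keyVertices T r R) ≤ #(insert r (R ∪ B)) := card_le_card hsub
    _ ≤ #R + #B + 1 := (card_insert_le _ _).trans (by gcongr; exact card_union_le R B)
    _ ≤ 2 * #R + 1 := by omega

lemma keyAncestor_of_isKey {v : V} (hk : IsKey T r R v) : keyAncestor T r R v = v := by
  unfold keyAncestor
  cases T.dist r v with
  | zero => rfl
  | succ n => exact if_pos hk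

lemma keyAncestor_of_not_isKey (hc : T.Connected) {v : V} (hk : ¬ IsKey T r R v) :
    keyAncestor T r R v = keyAncestor T r R (parent T r v) := by
  have hv : v ≠ r := by rintro rfl; exact hk isKey_root
  unfold keyAncestor
  rw [← (parent_spec hc hv).2]
  exact if_neg hk

lemma isKey_keyAncestor (hc : T.Connected) (v : V) : IsKey T r R (keyAncestor T r R v) := by
  induction v using induction_on_parent r hc with | _ v ih => ?_
  by_cases hk : IsKey T r R v
  · rwa [keyAncestor_of_isKey hk]
  · rw [keyAncestor_of_not_isKey hc hk]
    exact ih (by rintro rfl; exact hk isKey_root)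

lemma mem_part {u v : V} : v ∈ part T r R u ↔ keyAncestor T r R v = u := by
  simp [part]

lemma mem_part_self {u : V} (hu : IsKey T r R u) : u ∈ part T r R u :=
  mem_part.2 (keyAncestor_of_isKey hu)

lemma not_isKey_of_mem_part {u v : V} (hv : v ∈ part T r R u) (hne : v ≠ u) :
    ¬ IsKey T r R v :=
  fun hk => hne ((keyAncestor_of_isKey hk).symm.trans (mem_part.1 hv))

lemma mem_part_iff_parent_mem (hc : T.Connected) {u v : V} (hk : ¬ IsKey T r R v) :
    v ∈ part T r R u ↔ parent T r v ∈ part T r R u := by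
  rw [mem_part, mem_part, keyAncestor_of_not_isKey hc hk]

lemma part_inter_subset (u : V) : part T r R u ∩ R ⊆ {u} := fun v hv => by
  rw [mem_inter] at hv
  rw [mem_singleton, ← mem_part.1 hv.1, keyAncestor_of_isKey (.inl hv.2)]

lemma connected_induce_part (hc : T.Connected) {u : V} (hu : IsKey T r R u) :
    (T.induce (part T r R u : Set V)).Connected := by
  have hreach : ∀ v (hv : v ∈ part T r R u),
      (T.induce (part T r R u : Set V)).Reachable ⟨v, hv⟩ ⟨u, mem_part_self hu⟩ := by
    refine induction_on_parent r hc fun v ih hv => ?_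
    by_cases hvu : v = u
    · subst hvu; rfl
    have hk := not_isKey_of_mem_part hv hvu
    have hvr : v ≠ r := by rintro rfl; exact hk isKey_root
    have hpv := (mem_part_iff_parent_mem hc hk).1 hv
    have hadj : (T.induce (part T r R u : Set V)).Adj ⟨v, hv⟩ ⟨_, hpv⟩ :=
      (parent_spec hc hvr).1
    exact hadj.reachable.trans (ih hvr hpv)
  rw [connected_iff_exists_forall_reachable]
  exact ⟨⟨u, mem_part_self hu⟩, fun ⟨v, hv⟩ => (hreach v hv).symm⟩

lemma card_isKey_parent_mem_part (hc : T.Connected) {u : V} (hu : IsKey T r R u) :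
    #{y | y ≠ r ∧ IsKey T r R y ∧ parent T r y ∈ part T r R u} =
      #(descChildren T r R u) := by
  set S := part T r R u
  -- Double counting: a vertex of `S ∖ {u}` whose subtree meets `R` is such a child of a vertex
  -- of `S` and has exactly one such child itself, so the key children make up the difference.
  have hsplit := card_filter_add_card_filter_not
    (s := {y | y ≠ r ∧ HasDescendantIn T r R y ∧ parent T r y ∈ S}) (p := IsKey T r R)
  have hkey : ({y | y ≠ r ∧ HasDescendantIn T r R y ∧ parent T r y ∈ S} : Finset V).filter
      (IsKey T r R) = ({y | y ≠ r ∧ IsKey T r R y ∧ parent T r y ∈ S} : Finset V) := by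
    ext y
    simp only [mem_filter, mem_univ, true_and]
    constructor
    · rintro ⟨⟨hyr, -, hp⟩, hk⟩
      exact ⟨hyr, hk, hp⟩
    · rintro ⟨hyr, hk, hp⟩
      exact ⟨⟨hyr, hk.hasDescendantIn hyr, hp⟩, hk⟩
  have hnonkey :
      ({y | y ≠ r ∧ HasDescendantIn T r R y ∧ parent T r y ∈ S} : Finset V).filter
        (¬ IsKey T r R ·) = (S.erase u).filter (HasDescendantIn T r R) := by
    ext y
    simp only [mem_filter, mem_univ, true_and, mem_erase]
    constructor
    · rintro ⟨⟨-, hD, hp⟩, hk⟩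
      exact ⟨⟨fun h => hk (h ▸ hu), (mem_part_iff_parent_mem hc hk).2 hp⟩, hD⟩
    · rintro ⟨⟨hyu, hyS⟩, hD⟩
      have hk := not_isKey_of_mem_part hyS hyu
      have hyr : y ≠ r := by rintro rfl; exact hk isKey_root
      exact ⟨⟨hyr, hD, (mem_part_iff_parent_mem hc hk).1 hyS⟩, hk⟩
  have hrest : ∑ x ∈ S.erase u, #(descChildren T r R x) =
      #((S.erase u).filter (HasDescendantIn T r R)) := by
    rw [card_filter]
    refine sum_congr rfl fun x hx => card_descChildren_of_not_isKey ?_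
    obtain ⟨hxu, hxS⟩ := mem_erase.1 hx
    exact not_isKey_of_mem_part hxS hxu
  have hsum := sum_card_descChildren (T := T) (r := r) (R := R) S
  rw [← add_sum_erase S _ (mem_part_self hu), hrest] at hsum
  rw [hkey, hnonkey] at hsplit
  omega

lemma ncard_boundary_part_le (hT : T.IsTree) {u : V} (hu : IsKey T r R u) :
    {p : V × V | T.Adj p.1 p.2 ∧ p.1 ∈ part T r R u ∧ p.2 ∉ part T r R u}.ncard ≤
      #(descChildren T r R u) + 1 := by
  set S := part T r R u
  set K : Finset V := {y | y ≠ r ∧ IsKey T r R y ∧ parent T r y ∈ S}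
  have hsub : {p : V × V | T.Adj p.1 p.2 ∧ p.1 ∈ S ∧ p.2 ∉ S} ⊆
      ↑(insert (u, parent T r u) (K.image fun y => (parent T r y, y))) := by
    rintro ⟨x, y⟩ ⟨hadj, hx, hy⟩
    dsimp only at hadj hx hy
    simp only [coe_insert, coe_image, Set.mem_insert_iff, Set.mem_image, mem_coe, Prod.mk.injEq]
    rcases parent_eq_or_parent_eq_of_adj (r := r) hT hadj with ⟨-, rfl⟩ | ⟨hyr, rfl⟩
    · by_cases hk : IsKey T r R x
      · have hxu : x = u := (keyAncestor_of_isKey hk).symm.trans (mem_part.1 hx)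
        exact .inl ⟨hxu, by rw [hxu]⟩
      · exact absurd ((mem_part_iff_parent_mem hT.connected hk).1 hx) hy
    · by_cases hk : IsKey T r R y
      · exact .inr ⟨y, by simp [K, hyr, hk, hx], rfl, rfl⟩
      · exact absurd ((mem_part_iff_parent_mem hT.connected hk).2 hx) hy
  calc _ ≤ #(insert (u, parent T r u) (K.image fun y => (parent T r y, y))) :=
        (Set.ncard_le_ncard hsub (finite_toSet _)).trans (Set.ncard_coe_finset _).le
    _ ≤ #K + 1 := (card_insert_le _ _).trans (by gcongr; exact card_image_le)
    _ = #(descChildren T r R u) + 1 := by rw [card_isKey_parent_mem_part hT.connected hu]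

lemma card_descChildren_le_degree [DecidableRel T.Adj] (hc : T.Connected) (u : V) :
    #(descChildren T r R u) ≤ T.degree u :=
  (card_le_card (filter_subset _ _)).trans (card_children_le_degree hc u)

end KeyVertices
end TreePartition

theorem stmt18 :
    ∃ Cc : ℕ, ∀ (V : Type) [Fintype V] [DecidableEq V]
      (T : SimpleGraph V) [DecidableRel T.Adj],
      T.Connected → T.IsAcyclic → (∀ v : V, T.degree v ≤ 3) →
      ∀ R : Finset V,
      ∃ P : Finset (Finset V),
        (∀ S ∈ P, S.Nonempty) ∧
        (∀ S ∈ P, ∀ S' ∈ P, S ≠ S' → Disjoint S S') ∧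
        (∀ v : V, ∃ S ∈ P, v ∈ S) ∧
        (∀ S ∈ P, (T.induce (S : Set V)).Connected) ∧
        (∀ S ∈ P, (S ∩ R).card ≤ 3) ∧
        (∀ S ∈ P, Set.ncard {p : V × V | T.Adj p.1 p.2 ∧ p.1 ∈ S ∧ p.2 ∉ S} ≤ 4) ∧
        P.card ≤ (R.card + 2) ^ Cc := by
  open TreePartition in
  refine ⟨2, fun V _ _ T _ hc ha hdeg R => ?_⟩
  obtain ⟨r⟩ := hc.nonempty
  refine ⟨(keyVertices T r R).image (part T r R), ?_, ?_, ?_, ?_, ?_, ?_, ?_⟩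
  · exact forall_mem_image.2 fun u hu => ⟨u, mem_part_self (mem_keyVertices.1 hu)⟩
  · refine forall_mem_image.2 fun u _ => forall_mem_image.2 fun u' _ hne => ?_
    exact disjoint_left.2 fun v hv hv' => hne (by rw [← mem_part.1 hv, mem_part.1 hv'])
  · exact fun v => ⟨_, mem_image_of_mem _ (mem_keyVertices.2 (isKey_keyAncestor hc v)),
      mem_part.2 rfl⟩
  · exact forall_mem_image.2 fun u hu => connected_induce_part hc (mem_keyVertices.1 hu)
  · exact forall_mem_image.2 fun u _ => (card_le_card (part_inter_subset u)).trans (by simp)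
  · refine forall_mem_image.2 fun u hu => ?_
    have := (card_descChildren_le_degree (r := r) (R := R) hc u).trans (hdeg u)
    have := ncard_boundary_part_le ⟨hc, ha⟩ (mem_keyVertices.1 hu)
    omega
  · calc _ ≤ #(keyVertices T r R) := card_image_le
      _ ≤ 2 * #R + 1 := card_keyVertices_le
      _ ≤ (#R + 2) ^ 2 := by nlinarith
end
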